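/- arXiv:2111.03190 — 2 statements merged into one kernel-verified Lean document; each statement's English description precedes it below -/
import Mathlib

section
/- Let T₂^high = [−π/2, 3π/2)² \ [−π/2, π/2)². For every (θ₁, θ₂) ∈ T₂^high, the quantity T(θ₁,θ₂) = (2/9)(2 + cos θ₁)(2 + cos θ₂)(2 − cos θ₁ − cos θ₂) satisfies 8/9 ≤ T(θ₁,θ₂) ≤ 16/9. Moreover T(π, π) = 8/9 and T(π/2, π/2) = 16/9, so both bounds are attained on T₂^high. -/
open Real

def T2high : Set (ℝ × ℝ) :=
  (Set.Ico (-(π / 2)) (3 * π / 2) ×ˢ Set.Ico (-(π / 2)) (3 * π / 2)) \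
    (Set.Ico (-(π / 2)) (π / 2) ×ˢ Set.Ico (-(π / 2)) (π / 2))

noncomputable def Tmass2 (θ : ℝ × ℝ) : ℝ :=
  (2 / 9) * (2 + cos θ.1) * (2 + cos θ.2) * (2 - cos θ.1 - cos θ.2)

lemma key (x y : ℝ) (hx1 : -1 ≤ x) (hx2 : x ≤ 1) (hy1 : -1 ≤ y) (hy2 : y ≤ 1)
    (hy0 : y ≤ 0) :
    4 ≤ (2 + x) * (2 + y) * (2 - x - y) ∧ (2 + x) * (2 + y) * (2 - x - y) ≤ 8 := by
  constructor
  · nlinarith [mul_nonneg (by linarith : (0:ℝ) ≤ 1 + x) (by linarith : (0:ℝ) ≤ 1 + y),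
      mul_nonneg (by linarith : (0:ℝ) ≤ 1 - x) (by linarith : (0:ℝ) ≤ -y),
      mul_nonneg (mul_nonneg (by linarith : (0:ℝ) ≤ 1 + x) (by linarith : (0:ℝ) ≤ 1 + y)) (by linarith : (0:ℝ) ≤ -y),
      mul_nonneg (mul_nonneg (by linarith : (0:ℝ) ≤ 1 - x) (by linarith : (0:ℝ) ≤ 1 + y)) (by linarith : (0:ℝ) ≤ -y),
      sq_nonneg (x + y), sq_nonneg (x - y), sq_nonneg x, sq_nonneg y]
  · nlinarith [mul_nonneg (by linarith : (0:ℝ) ≤ 2 + x) (by linarith : (0:ℝ) ≤ -y),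
      mul_nonneg (mul_nonneg (by linarith : (0:ℝ) ≤ 2 + x) (by linarith : (0:ℝ) ≤ 2 + y)) (by linarith : (0:ℝ) ≤ -y),
      sq_nonneg (x + y), sq_nonneg (x - y), sq_nonneg x, sq_nonneg y,
      mul_nonneg (by linarith : (0:ℝ) ≤ -y) (sq_nonneg x)]

theorem stmt_7 :
    (∀ θ ∈ T2high, 8 / 9 ≤ Tmass2 θ ∧ Tmass2 θ ≤ 16 / 9) ∧
    (π, π) ∈ T2high ∧ Tmass2 (π, π) = 8 / 9 ∧
    (π / 2, π / 2) ∈ T2high ∧ Tmass2 (π / 2, π / 2) = 16 / 9 := by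
  have hpi := Real.pi_pos
  refine ⟨?_, ?_, ?_, ?_, ?_⟩
  · rintro ⟨a, b⟩ ⟨⟨⟨ha1, ha2⟩, ⟨hb1, hb2⟩⟩, hnot⟩
    simp only [Set.mem_prod, Set.mem_Ico] at hnot
    push_neg at hnot
    have hca1 := Real.neg_one_le_cos a
    have hca2 := Real.cos_le_one a
    have hcb1 := Real.neg_one_le_cos b
    have hcb2 := Real.cos_le_one b
    have hcase : cos a ≤ 0 ∨ cos b ≤ 0 := by
      rcases le_or_gt (π / 2) a with h | h
      · left
        exact Real.cos_nonpos_of_pi_div_two_le_of_le h (by linarith)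
      · right
        have hb : π / 2 ≤ b := hnot ⟨ha1, h⟩ hb1
        exact Real.cos_nonpos_of_pi_div_two_le_of_le hb (by linarith)
    simp only [Tmass2]
    rcases hcase with h | h
    · have := key (cos b) (cos a) hcb1 hcb2 hca1 hca2 h
      constructor <;> nlinarith [this.1, this.2]
    · have := key (cos a) (cos b) hca1 hca2 hcb1 hcb2 h
      constructor <;> nlinarith [this.1, this.2]
  · exact ⟨⟨⟨by linarith, by linarith⟩, ⟨by linarith, by linarith⟩⟩,
      by simp only [Set.mem_prod, Set.mem_Ico]; push_neg; intro h; linarith [h.2]⟩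
  · simp [Tmass2]; norm_num
  · exact ⟨⟨⟨by linarith, by linarith⟩, ⟨by linarith, by linarith⟩⟩,
      by simp only [Set.mem_prod, Set.mem_Ico]; push_neg; intro h; linarith [h.2]⟩
  · simp [Tmass2]; norm_num
end

section
/- Let T₂^high = [−π/2, 3π/2)² \ [−π/2, π/2)². Define μ(ω) = sup_{(θ₁,θ₂) ∈ T₂^high} |1 − ω · (1/60)((cos θ₁ + cos θ₂ + 4)² + (cos θ₁ + cos θ₂)² + 16)(2 − cos θ₁ − cos θ₂)| for ω ∈ ℝ. Then μ(20/23) = 9/23, and μ(ω) > 9/23 for every real ω ≠ 20/23. In other words, the optimal smoothing factor of the vertex-wise additive Vanka relaxation for the 2D Laplacian is 9/23, uniquely achieved at ω = 20/23. -/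
open Real

noncomputable def muV2 (ω : ℝ) : ℝ :=
  sSup ((fun θ : ℝ × ℝ =>
    |1 - ω * ((1 / 60) * ((cos θ.1 + cos θ.2 + 4) ^ 2 + (cos θ.1 + cos θ.2) ^ 2 + 16) *
      (2 - cos θ.1 - cos θ.2))|) '' T2high)

/-!
The symbol M̃Ã depends on θ only through c = cos θ₁ + cos θ₂, which ranges over [-2, 1] on
the high frequencies, and on that interval it takes values in [7/10, 8/5], both attained.
Since t ↦ |1 - ω t| is convex, μ(ω) = max(|1 - 7ω/10|, |1 - 8ω/5|), and this is minimised
exactly where the two branches cross, at ω = 2/(7/10 + 8/5) = 20/23, with value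
(8/5 - 7/10)/(8/5 + 7/10) = 9/23.
-/

section Richardson

variable {α : Type*} {s : Set α} {f : α → ℝ} {m M : ℝ}

theorem abs_one_sub_mul_le_max {t : ℝ} (ht : t ∈ Set.Icc m M) (ω : ℝ) :
    |1 - ω * t| ≤ max |1 - ω * m| |1 - ω * M| := by
  rcases le_total 0 ω with hω | hω
  · rw [max_comm]
    exact abs_le_max_abs_abs (by nlinarith [ht.2]) (by nlinarith [ht.1])
  · exact abs_le_max_abs_abs (by nlinarith [ht.1]) (by nlinarith [ht.2])

theorem sSup_abs_one_sub_mul_image {a b : α} (ha : a ∈ s) (hb : b ∈ s) (hfa : f a = m)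
    (hfb : f b = M) (hf : ∀ x ∈ s, f x ∈ Set.Icc m M) (ω : ℝ) :
    sSup ((fun x => |1 - ω * f x|) '' s) = max |1 - ω * m| |1 - ω * M| := by
  refine IsGreatest.csSup_eq ⟨?_, ?_⟩
  · rcases le_total |1 - ω * m| |1 - ω * M| with h | h
    · rw [max_eq_right h]
      exact ⟨b, hb, by simp only [hfb]⟩
    · rw [max_eq_left h]
      exact ⟨a, ha, by simp only [hfa]⟩
  · rintro _ ⟨x, hx, rfl⟩
    exact abs_one_sub_mul_le_max (hf x hx) ω

theorem max_abs_one_sub_mul_optimal (hm : 0 < m) (hmM : m ≤ M) :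
    max |1 - 2 / (m + M) * m| |1 - 2 / (m + M) * M| = (M - m) / (M + m) := by
  have hne : m + M ≠ 0 := by linarith
  have hne' : M + m ≠ 0 := by linarith
  have hlow : 1 - 2 / (m + M) * m = (M - m) / (M + m) := by field_simp; ring
  have hhigh : 1 - 2 / (m + M) * M = -((M - m) / (M + m)) := by field_simp; ring
  have hnonneg : 0 ≤ (M - m) / (M + m) := div_nonneg (by linarith) (by linarith)
  rw [hlow, hhigh, abs_neg, max_self, abs_of_nonneg hnonneg]

theorem lt_max_abs_one_sub_mul_of_ne (hm : 0 < m) (hmM : m ≤ M) {ω : ℝ} (hω : ω ≠ 2 / (m + M)) :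
    (M - m) / (M + m) < max |1 - ω * m| |1 - ω * M| := by
  have hpos : 0 < m + M := by linarith
  rcases hω.lt_or_gt with h | h
  · have : (M - m) / (M + m) < 1 - ω * m := by
      rw [lt_div_iff₀ hpos] at h
      rw [div_lt_iff₀ (by linarith)]
      nlinarith
    exact this.trans_le ((le_abs_self _).trans (le_max_left _ _))
  · have : (M - m) / (M + m) < -(1 - ω * M) := by
      rw [div_lt_iff₀ hpos] at h
      rw [div_lt_iff₀ (by linarith)]
      nlinarith
    exact this.trans_le ((neg_le_abs _).trans (le_max_right _ _))

end Richardson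

/-- The product of the Vanka and Laplacian symbols, as a function of `c = cos θ₁ + cos θ₂`. -/
noncomputable def vankaLaplaceSymbol (c : ℝ) : ℝ :=
  (1 / 60) * ((c + 4) ^ 2 + c ^ 2 + 16) * (2 - c)

theorem vankaLaplaceSymbol_mem_Icc {c : ℝ} (hc : c ∈ Set.Icc (-2) 1) :
    vankaLaplaceSymbol c ∈ Set.Icc (7 / 10) (8 / 5) := by
  obtain ⟨h1, h2⟩ := hc
  constructor <;> unfold vankaLaplaceSymbol
  · nlinarith [mul_nonneg (by linarith : (0:ℝ) ≤ 1 - c) (by nlinarith : (0:ℝ) ≤ 2*c^2 + 6*c + 22)]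
  · nlinarith [mul_nonneg (by linarith : (0:ℝ) ≤ c + 2) (by positivity : (0:ℝ) ≤ c^2 + 8)]

theorem cos_nonpos_of_mem_Ico_of_notMem {x : ℝ} (h : x ∈ Set.Ico (-(π / 2)) (3 * π / 2))
    (h' : x ∉ Set.Ico (-(π / 2)) (π / 2)) : cos x ≤ 0 :=
  cos_nonpos_of_pi_div_two_le_of_le (not_lt.mp fun hx => h' ⟨h.1, hx⟩) (by linarith [h.2])

theorem cos_add_cos_mem_Icc {θ : ℝ × ℝ} (hθ : θ ∈ T2high) :
    cos θ.1 + cos θ.2 ∈ Set.Icc (-2) 1 := by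
  obtain ⟨⟨h1, h2⟩, hlow⟩ := hθ
  refine ⟨by linarith [neg_one_le_cos θ.1, neg_one_le_cos θ.2], ?_⟩
  by_cases h1' : θ.1 ∈ Set.Ico (-(π / 2)) (π / 2)
  · have h2' : θ.2 ∉ Set.Ico (-(π / 2)) (π / 2) := fun h2' => hlow ⟨h1', h2'⟩
    linarith [cos_nonpos_of_mem_Ico_of_notMem h2 h2', cos_le_one θ.1]
  · linarith [cos_nonpos_of_mem_Ico_of_notMem h1 h1', cos_le_one θ.2]

theorem pi_div_two_zero_mem_T2high : ((π / 2, 0) : ℝ × ℝ) ∈ T2high :=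
  ⟨⟨⟨by linarith [pi_pos], by linarith [pi_pos]⟩, ⟨by linarith [pi_pos], by linarith [pi_pos]⟩⟩,
    fun h => lt_irrefl _ h.1.2⟩

theorem pi_pi_mem_T2high : ((π, π) : ℝ × ℝ) ∈ T2high :=
  ⟨⟨⟨by linarith [pi_pos], by linarith [pi_pos]⟩, ⟨by linarith [pi_pos], by linarith [pi_pos]⟩⟩,
    fun h => by linarith [h.1.2, pi_pos]⟩

theorem muV2_eq_max (ω : ℝ) : muV2 ω = max |1 - ω * (7 / 10)| |1 - ω * (8 / 5)| := by
  have hsymbol : muV2 ω =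
      sSup ((fun θ : ℝ × ℝ => |1 - ω * vankaLaplaceSymbol (cos θ.1 + cos θ.2)|) '' T2high) := by
    simp only [muV2, vankaLaplaceSymbol, sub_sub]
  rw [hsymbol]
  refine sSup_abs_one_sub_mul_image pi_div_two_zero_mem_T2high pi_pi_mem_T2high ?_ ?_
    (fun θ hθ => vankaLaplaceSymbol_mem_Icc (cos_add_cos_mem_Icc hθ)) ω
  · norm_num [vankaLaplaceSymbol]
  · norm_num [vankaLaplaceSymbol]

theorem stmt_10 :
    muV2 (20 / 23) = 9 / 23 ∧ ∀ ω : ℝ, ω ≠ 20 / 23 → 9 / 23 < muV2 ω := by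
  have hm : (0 : ℝ) < 7 / 10 := by norm_num
  have hmM : (7 : ℝ) / 10 ≤ 8 / 5 := by norm_num
  have hω₀ : (20 : ℝ) / 23 = 2 / (7 / 10 + 8 / 5) := by norm_num
  have hμ₀ : (9 : ℝ) / 23 = (8 / 5 - 7 / 10) / (8 / 5 + 7 / 10) := by norm_num
  refine ⟨?_, fun ω hω => ?_⟩
  · rw [muV2_eq_max, hω₀, hμ₀, max_abs_one_sub_mul_optimal hm hmM]
  · rw [muV2_eq_max, hμ₀]
    exact lt_max_abs_one_sub_mul_of_ne hm hmM (hω₀ ▸ hω)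
end
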